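/- The inference rule 'from the premises {φ → τ(φ) | φ ∈ X} derive ⟪C:X⟫_s → ⟪C:τ(X)⟫_s' is derivable for any function τ : Φ → Φ: if ⊢ φ → τ(φ) for each φ ∈ X, then ⊢ ⟪C:X⟫_s → ⟪C:τ(X)⟫_s. -/

import Mathlib

/-- Formulas of the language Φ, over a set `A` of agents, with propositional
variables indexed by `ℕ`.  `dil C X s` is the ethical-dilemma modality `[C:X]_s`,
where the finite set `X` of formulae is represented by a list. -/
inductive Fm (A : Type) : Type
  | var : ℕ → Fm A
  | neg : Fm A → Fm A
  | imp : Fm A → Fm A → Fm A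
  | dil : Set A → List (Fm A) → (A → ℝ) → Fm A

namespace Fm

variable {A : Type}

/-- Truth ⊤. -/
def top : Fm A := imp (var 0) (var 0)

/-- Falsehood ⊥. -/
def bot : Fm A := neg top

/-- Conjunction, defined as usual. -/
def conj (φ ψ : Fm A) : Fm A := neg (imp φ (neg ψ))

/-- Disjunction, defined as usual. -/
def disj (φ ψ : Fm A) : Fm A := imp (neg φ) ψ

/-- Disjunction of all formulae in a list (`∨∅ = ⊥`). -/
def bigOr : List (Fm A) → Fm A
  | [] => bot
  | φ :: rest => disj φ (bigOr rest)

/-- Conjunction of all formulae in a list (`∧∅ = ⊤`). -/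
def bigAnd : List (Fm A) → Fm A
  | [] => top
  | φ :: rest => conj φ (bigAnd rest)

/-- `X ⊗ Y = {φ ∧ ψ | φ ∈ X, ψ ∈ Y}`. -/
def otimes (X Y : List (Fm A)) : List (Fm A) :=
  X.flatMap fun φ => Y.map fun ψ => conj φ ψ

/-- `X₁ ⊗ X₂ ⊗ ⋯ ⊗ Xₙ`, which is `{⊤}` for `n = 0` and `X₁` for `n = 1`. -/
def bigOtimes : List (List (Fm A)) → List (Fm A)
  | [] => [top]
  | X :: rest => rest.foldl otimes X

/-- The weak dilemma `⟪C:X⟫_s`, i.e. the disjunction `⋁_{∅ ≠ Z ⊆ X} [C:Z]_s`. -/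
def wdil (C : Set A) (X : List (Fm A)) (s : A → ℝ) : Fm A :=
  bigOr (((X.sublists).filter fun Z => !Z.isEmpty).map fun Z => dil C Z s)

/-- A propositional tautology in the language Φ: a formula that evaluates to true
under every Boolean valuation that respects negation and implication (treating
variables and dilemma formulae as atoms). -/
def Tautology (φ : Fm A) : Prop :=
  ∀ v : Fm A → Bool,
    (∀ ψ, v (neg ψ) = !v ψ) →
    (∀ ψ χ, v (imp ψ χ) = (!v ψ || v χ)) →
    v φ = true

/-- Derivability `⊢ φ` in the logical system: all propositional tautologies,
the Combination, Monotonicity, Minimality and No Alternatives axioms, and the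
Modus Ponens, Necessitation and Substitution inference rules. -/
inductive Derives : Fm A → Prop
  | taut {φ : Fm A} : Tautology φ → Derives φ
  | comb {C : Set A} {X Y : List (Fm A)} {s : A → ℝ} :
      C.Nonempty → X ≠ [] → Y ≠ [] →
      Derives (imp (dil C X s) (imp (dil C Y s) (wdil C (otimes X Y) s)))
  | mono {C D : Set A} {X : List (Fm A)} {s s' : A → ℝ} :
      C.Nonempty → C ⊆ D → X ≠ [] → (∀ a, s a ≤ s' a) →
      Derives (imp (dil C X s') (wdil D X s))
  | minim {C : Set A} {X Y : List (Fm A)} {s : A → ℝ} :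
      C.Nonempty → Y ≠ [] → {ψ | ψ ∈ Y} ⊂ {ψ | ψ ∈ X} →
      Derives (imp (dil C X s) (neg (dil C Y s)))
  | noalt {C D : Set A} {X : List (Fm A)} {s : A → ℝ} :
      C.Nonempty → D.Nonempty → (∃ φ, {ψ | ψ ∈ X} = {φ}) →
      Derives (imp (dil C X s) (dil D X s))
  | mp {φ ψ : Fm A} : Derives φ → Derives (imp φ ψ) → Derives ψ
  | nec {φ : Fm A} {C : Set A} {s : A → ℝ} :
      C.Nonempty → Derives φ → Derives (dil C [φ] s)
  | subst {C : Set A} {X : List (Fm A)} {s : A → ℝ} {τ : Fm A → Fm A} :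
      C.Nonempty → X ≠ [] → (∀ φ ∈ X, Derives (imp φ (τ φ))) →
      Derives (imp (dil C X s) (wdil C (X.map τ) s))

/-- `Γ ⊢ φ`: provable from the theorems of the system and the additional set of
formulae `Γ` using the Modus Ponens inference rule only. -/
inductive DerivesFrom (Γ : Set (Fm A)) : Fm A → Prop
  | thm {φ : Fm A} : Derives φ → DerivesFrom Γ φ
  | hyp {φ : Fm A} : φ ∈ Γ → DerivesFrom Γ φ
  | mp {φ ψ : Fm A} : DerivesFrom Γ φ → DerivesFrom Γ (imp φ ψ) → DerivesFrom Γ ψ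

end Fm

/-- A game `(W, Δ, |·|, M, π)`. -/
structure Game (A : Type) where
  /-- the set of states -/
  W : Type
  /-- the nonempty set Δ of actions -/
  St : Type
  st_nonempty : Nonempty St
  /-- `cost d a w` is the cost `|d|ᵃ_w` of action `d` for agent `a` in state `w` -/
  cost : St → A → W → ℝ
  /-- the mechanism `M ⊆ W × Δ^𝒜 × W` -/
  M : W → (A → St) → W → Prop
  /-- valuation of propositional variables -/
  pi : ℕ → Set W

namespace Game

variable {A : Type}

/-- Satisfaction `w ⊩ φ` (as `Sat G φ w`). -/
def Sat (G : Game A) : Fm A → G.W → Prop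
  | .var p, w => w ∈ G.pi p
  | .neg φ, w => ¬ Sat G φ w
  | .imp φ ψ, w => ¬ Sat G φ w ∨ Sat G ψ w
  | .dil C X s, w =>
      (∀ t : ↥C → G.St, ∃ φ, ∃ _ : φ ∈ X,
          ∀ (δ : A → G.St) (u : G.W),
            (∀ a : A, G.cost (δ a) a w ≤ s a) → (∀ a : ↥C, t a = δ a.1) →
            G.M w δ u → Sat G φ u) ∧
      (∀ Y : Set (Fm A), Y.Nonempty → Y ⊂ {ψ | ψ ∈ X} →
          ∃ t : ↥C → G.St, ∀ φ, ∀ _ : φ ∈ Y,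
            ∃ (δ : A → G.St) (u : G.W),
              (∀ a : A, G.cost (δ a) a w ≤ s a) ∧ (∀ a : ↥C, t a = δ a.1) ∧
              G.M w δ u ∧ ¬ Sat G φ u)
termination_by φ _ => sizeOf φ
decreasing_by
  all_goals
    first
      | (simp <;> omega)
      | (have h1 : sizeOf φ < sizeOf X := List.sizeOf_lt_of_mem ‹φ ∈ X›
         simp <;> omega)
      | (have hX : φ ∈ X := by
           have := (‹Y ⊂ {ψ | ψ ∈ X}›.1) ‹φ ∈ Y›
           simpa using this
         have h1 : sizeOf φ < sizeOf X := List.sizeOf_lt_of_mem hX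
         simp <;> omega)

end Game

namespace Fm

variable {A : Type}

/-- A set of formulae is consistent if ⊥ is not provable from it. -/
def Consistent (Γ : Set (Fm A)) : Prop := ¬ DerivesFrom Γ bot

/-- A maximal consistent set of formulae. -/
def MCS (Γ : Set (Fm A)) : Prop :=
  Consistent Γ ∧ ∀ φ : Fm A, φ ∉ Γ → ¬ Consistent (insert φ Γ)

end Fm

/-- The canonical game: states are maximal consistent sets, actions are pairs
`(Ψ, c)` of a set of "demanded" formulae and an offered price `c`. -/
def canonicalGame (A : Type) : Game A where
  W := {Γ : Set (Fm A) // Fm.MCS Γ}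
  St := Set (Fm A) × ℝ
  st_nonempty := ⟨(∅, 0)⟩
  cost := fun d _ _ => d.2
  M := fun w δ u =>
    (∀ a : A, (δ a).1 ⊆ u.1) ∧
    ∀ (C : Set A) (X : List (Fm A)) (s : A → ℝ),
      C.Nonempty → X ≠ [] → Fm.wdil C X s ∈ w.1 → (∀ a : A, (δ a).2 ≤ s a) →
      ∃ a ∈ C, ∃ φ ∈ (δ a).1, φ ∈ X
  pi := fun p => {w | Fm.var p ∈ w.1}

/-! A weak dilemma `⟪C:X⟫_s` is the disjunction of the `[C:Z]_s` over the nonempty sublists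
`Z` of `X`. By Substitution each disjunct `[C:Z]_s` implies `⟪C:τ(Z)⟫_s`, and since `τ(Z)` is a
sublist of `τ(X)`, every disjunct of `⟪C:τ(Z)⟫_s` is one of `⟪C:τ(X)⟫_s`. -/

namespace Fm

variable {A : Type}

lemma eval_bigOr {v : Fm A → Bool} (hneg : ∀ ψ, v (neg ψ) = !v ψ)
    (himp : ∀ ψ χ, v (imp ψ χ) = (!v ψ || v χ)) (L : List (Fm A)) :
    v (bigOr L) = L.any v := by
  induction L with
  | nil => simp [bigOr, bot, top, hneg, himp]
  | cons φ L ih => simp [bigOr, disj, hneg, himp, ih]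

lemma tautology_bigOr_imp_bigOr {L M : List (Fm A)} (hLM : L ⊆ M) :
    Tautology (imp (bigOr L) (bigOr M)) := by
  intro v hneg himp
  rw [himp, eval_bigOr hneg himp, eval_bigOr hneg himp]
  cases hL : L.any v
  · rfl
  · obtain ⟨φ, hφ, hvφ⟩ := List.any_eq_true.mp hL
    simp [List.any_eq_true.mpr ⟨φ, hLM hφ, hvφ⟩]

lemma tautology_wdil_imp_wdil_of_sublist {C : Set A} {Y X : List (Fm A)} (s : A → ℝ)
    (hYX : Y.Sublist X) : Tautology (imp (wdil C Y s) (wdil C X s)) := by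
  refine tautology_bigOr_imp_bigOr fun d hd => ?_
  simp only [List.mem_map, List.mem_filter, List.mem_sublists] at hd ⊢
  obtain ⟨Z, ⟨hZY, hZ⟩, rfl⟩ := hd
  exact ⟨Z, ⟨hZY.trans hYX, hZ⟩, rfl⟩

lemma Derives.imp_trans {φ ψ χ : Fm A} (hφψ : Derives (imp φ ψ)) (hψχ : Derives (imp ψ χ)) :
    Derives (imp φ χ) := by
  have syllogism : Tautology (imp (imp φ ψ) (imp (imp ψ χ) (imp φ χ))) := by
    intro v _ himp
    simp only [himp]
    cases v φ <;> cases v ψ <;> cases v χ <;> rfl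
  exact .mp hψχ (.mp hφψ (.taut syllogism))

lemma Derives.bigOr_imp {L : List (Fm A)} {χ : Fm A} (h : ∀ φ ∈ L, Derives (imp φ χ)) :
    Derives (imp (bigOr L) χ) := by
  induction L with
  | nil =>
    refine .taut fun v hneg himp => ?_
    rw [himp, eval_bigOr hneg himp]
    rfl
  | cons φ L ih =>
    have cases_on_disj : Tautology
        (imp (imp φ χ) (imp (imp (bigOr L) χ) (imp (bigOr (φ :: L)) χ))) := by
      intro v hneg himp
      simp only [himp, eval_bigOr hneg himp, List.any_cons]
      cases v φ <;> cases L.any v <;> cases v χ <;> rfl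
    exact .mp (ih fun ψ hψ => h ψ (List.mem_cons_of_mem φ hψ))
      (.mp (h φ List.mem_cons_self) (.taut cases_on_disj))

end Fm

theorem wdil_substitution_general {A : Type} (C : Set A) (hC : C.Nonempty)
    (X : List (Fm A)) (s : A → ℝ) (τ : Fm A → Fm A)
    (h : ∀ φ ∈ X, Fm.Derives (Fm.imp φ (τ φ))) :
    Fm.Derives (Fm.imp (Fm.wdil C X s) (Fm.wdil C (X.map τ) s)) := by
  refine Fm.Derives.bigOr_imp fun d hd => ?_
  simp only [List.mem_map, List.mem_filter, List.mem_sublists] at hd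
  obtain ⟨Z, ⟨hZX, hZ⟩, rfl⟩ := hd
  have hZ : Z ≠ [] := by simpa using hZ
  exact (Fm.Derives.subst hC hZ fun φ hφ => h φ (hZX.subset hφ)).imp_trans
    (.taut (Fm.tautology_wdil_imp_wdil_of_sublist s (hZX.map τ)))

/-- The rule `from {φ → τ(φ) | φ ∈ X} derive ⟪C:X⟫_s → ⟪C:τ(X)⟫_s` is derivable. -/
theorem wdil_substitution {A : Type} [Nonempty A] (C : Set A) (hC : C.Nonempty)
    (X : List (Fm A)) (hX : X ≠ []) (s : A → ℝ) (τ : Fm A → Fm A)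
    (h : ∀ φ ∈ X, Fm.Derives (Fm.imp φ (τ φ))) :
    Fm.Derives (Fm.imp (Fm.wdil C X s) (Fm.wdil C (X.map τ) s)) :=
  wdil_substitution_general C hC X s τ h
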